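/- arXiv:0911.2441 — 2 statements merged into one kernel-verified Lean document; each statement's English description precedes it below -/
import Mathlib

section
/- For every odd integer k > 1, the only real numbers z ∈ (0,1) with \(\sum_{n=-\infty}^{+\infty} 1/(n+z)^k = 0\) is z = 1/2. -/
set_option maxHeartbeats 1000000 in
lemma aux_summable (k : ℕ) (hk : 2 ≤ k) (c : ℝ) (hc : 0 < c) (a : ℕ → ℝ)
    (ha : ∀ n, c * (n + 1) ≤ a n) : Summable (fun n : ℕ => 1 / (a n) ^ k) := by
  have hpos : ∀ n : ℕ, 0 < a n := fun n =>
    lt_of_lt_of_le (by positivity) (ha n)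
  have hsum : Summable (fun n : ℕ => (1 / c ^ k) * (1 / ((n : ℝ) + 1) ^ k)) := by
    apply Summable.mul_left
    have := (Real.summable_one_div_nat_pow (p := k)).mpr (lt_of_lt_of_le one_lt_two hk)
    exact_mod_cast (summable_nat_add_iff 1).mpr this
  apply Summable.of_nonneg_of_le (fun n => div_nonneg zero_le_one (pow_nonneg (hpos n).le k)) _ hsum
  intro n
  rw [div_mul_div_comm, one_mul]
  apply one_div_le_one_div_of_le (by positivity)
  calc c ^ k * ((n:ℝ)+1) ^ k = (c * ((n:ℝ)+1)) ^ k := (mul_pow _ _ _).symm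
    _ ≤ (a n) ^ k := pow_le_pow_left₀ (by positivity) (ha n) k

set_option maxHeartbeats 1000000 in
lemma key (k : ℕ) (hk : 1 < k) (hodd : Odd k) (z : ℝ) (hz : z ∈ Set.Ioo (0:ℝ) 1) :
    HasSum (fun n : ℤ => 1 / ((n : ℝ) + z)^k)
      (∑' n : ℕ, (1 / ((n : ℝ) + z)^k - 1 / ((n : ℝ) + 1 - z)^k)) := by
  obtain ⟨hz0, hz1⟩ := hz
  have hk2 : 2 ≤ k := hk
  have hA : Summable (fun n : ℕ => 1 / ((n:ℝ) + z) ^ k) := by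
    apply aux_summable k hk2 z hz0
    intro n; nlinarith [Nat.cast_nonneg (α := ℝ) n]
  have hB : Summable (fun n : ℕ => 1 / ((n:ℝ) + 1 - z) ^ k) := by
    apply aux_summable k hk2 (1 - z) (by linarith)
    intro n; nlinarith [Nat.cast_nonneg (α := ℝ) n]
  have hneg : ∀ n : ℕ, (1:ℝ) / (((-(n+1) : ℤ) : ℝ) + z) ^ k = -(1 / ((n:ℝ) + 1 - z) ^ k) := by
    intro n
    have : (((-(n+1) : ℤ)) : ℝ) + z = -((n:ℝ) + 1 - z) := by push_cast; ring
    rw [this, hodd.neg_pow, div_neg]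
  have h2 : HasSum (fun n : ℕ => 1 / (((-(n+1) : ℤ) : ℝ) + z) ^ k)
      (-(∑' n : ℕ, 1 / ((n:ℝ) + 1 - z) ^ k)) := by
    have := hB.hasSum.neg
    simpa only [← hneg] using this
  have h1 : HasSum (fun n : ℕ => 1 / (((n : ℤ) : ℝ) + z) ^ k)
      (∑' n : ℕ, 1 / ((n:ℝ) + z) ^ k) := by
    simpa using hA.hasSum
  have := HasSum.of_nat_of_neg_add_one (f := fun n : ℤ => 1 / ((n : ℝ) + z)^k) h1 h2
  rw [Summable.tsum_sub hA hB, sub_eq_add_neg]; exact this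

theorem stmt_7 (k : ℕ) (hk : 1 < k) (hodd : Odd k) (z : ℝ) (hz : z ∈ Set.Ioo (0:ℝ) 1) :
    ∑' n : ℤ, 1 / ((n : ℝ) + z)^k = 0 ↔ z = 1/2 := by
  have hkey := key k hk hodd z hz
  obtain ⟨hz0, hz1⟩ := hz
  have hk2 : 2 ≤ k := hk
  have hA : Summable (fun n : ℕ => 1 / ((n:ℝ) + z) ^ k) := by
    apply aux_summable k hk2 z hz0
    intro n; nlinarith [Nat.cast_nonneg (α := ℝ) n]
  have hB : Summable (fun n : ℕ => 1 / ((n:ℝ) + 1 - z) ^ k) := by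
    apply aux_summable k hk2 (1 - z) (by linarith)
    intro n; nlinarith [Nat.cast_nonneg (α := ℝ) n]
  rw [hkey.tsum_eq]
  constructor
  · intro h0
    by_contra hne
    rcases lt_or_gt_of_ne hne with hlt | hgt
    · have hpos : 0 < ∑' n : ℕ, (1 / ((n:ℝ) + z)^k - 1 / ((n:ℝ) + 1 - z)^k) := by
        apply Summable.tsum_pos (hA.sub hB) _ 0
        · have h1 : (0:ℝ) < ((0:ℕ):ℝ) + z := by push_cast; linarith
          have h2 : ((0:ℕ):ℝ) + z < ((0:ℕ):ℝ) + 1 - z := by push_cast; linarith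
          have := one_div_lt_one_div_of_lt (pow_pos h1 k) (pow_lt_pow_left₀ h2 h1.le (by omega : k ≠ 0))
          linarith
        · intro n
          have h1 : (0:ℝ) < (n:ℕ) + z := by positivity
          have h2 : ((n:ℕ):ℝ) + z ≤ (n:ℕ) + 1 - z := by push_cast; linarith
          have := one_div_le_one_div_of_le (pow_pos h1 k) (pow_le_pow_left₀ h1.le h2 k)
          linarith
      linarith
    · have hpos : 0 < ∑' n : ℕ, (1 / ((n:ℝ) + 1 - z)^k - 1 / ((n:ℝ) + z)^k) := by
        apply Summable.tsum_pos (hB.sub hA) _ 0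
        · have h1 : (0:ℝ) < ((0:ℕ):ℝ) + 1 - z := by push_cast; linarith
          have h2 : ((0:ℕ):ℝ) + 1 - z < ((0:ℕ):ℝ) + z := by push_cast; linarith
          have := one_div_lt_one_div_of_lt (pow_pos h1 k) (pow_lt_pow_left₀ h2 h1.le (by omega : k ≠ 0))
          linarith
        · intro n
          have h1 : (0:ℝ) < (n:ℕ) + 1 - z := by push_cast; linarith
          have h2 : ((n:ℕ):ℝ) + 1 - z ≤ (n:ℕ) + z := by push_cast; linarith
          have := one_div_le_one_div_of_le (pow_pos h1 k) (pow_le_pow_left₀ h1.le h2 k)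
          linarith
      have : ∑' n : ℕ, (1 / ((n:ℝ) + z)^k - 1 / ((n:ℝ) + 1 - z)^k)
          = -∑' n : ℕ, (1 / ((n:ℝ) + 1 - z)^k - 1 / ((n:ℝ) + z)^k) := by
        rw [← tsum_neg]; congr 1; funext n; ring
      rw [this] at h0
      linarith
  · intro h
    subst h
    have : ∀ n : ℕ, (1 / ((n:ℝ) + 1/2)^k - 1 / ((n:ℝ) + 1 - 1/2)^k) = 0 := by
      intro n
      have : ((n:ℝ) + 1 - 1/2) = (n:ℝ) + 1/2 := by ring
      rw [this, sub_self]
    simp only [this, tsum_zero]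
end

section
/- For every positive integer k and every rational α ∉ ℤ, the number \(\psi_k(1-\alpha) - (-1)^k \psi_k(\alpha)\) is either zero or an algebraic multiple of π^{k+1}, and it is zero if and only if k is even and α is a half-integer. -/
noncomputable def digamma (x : ℝ) : ℝ := deriv Real.Gamma x / Real.Gamma x

/-!
Logarithmic differentiation of `Γ(x) Γ(1 - x) = π / sin (π x)` gives
`ψ(1 - x) - ψ(x) = π cot (π x)`. Since `d/dx Q(cot (π x)) = -π ((1 + X²) Q')(cot (π x))`, induction
gives `ψ_k(1 - x) - (-1)^k ψ_k(x) = P_k(cot (π x)) π^(k+1)` with `P_k = cotPoly k`.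
For rational `x`, `cot (π x)` is algebraic, hence so is `P_k(cot (π x))`.

`P_k` has natural coefficients, nonzero exactly in the degrees `i ≤ k + 1` with `i + k` odd. For odd
`k` it is a sum of even powers with positive constant term, so it never vanishes; for even `k`,
`t P_k(t)` is a sum of even powers with a positive `t²` term, so `P_k(t) = 0` only at `t = 0`, and
`cot (π x) = 0` exactly at the half-integers.
-/

open Real Polynomial Set

noncomputable def cotPoly : ℕ → ℕ[X]
  | 0 => X
  | k + 1 => (1 + X ^ 2) * derivative (cotPoly k)

lemma coeff_cotPoly_succ (k i : ℕ) :
    (cotPoly (k + 1)).coeff i = (cotPoly k).coeff (i + 1) * (i + 1) +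
      if 2 ≤ i then (cotPoly k).coeff (i - 1) * (i - 1) else 0 := by
  rw [cotPoly, add_mul, one_mul, coeff_add, coeff_X_pow_mul', coeff_derivative]
  split_ifs with hi
  · obtain ⟨j, rfl⟩ := Nat.exists_eq_add_of_le hi
    simp [coeff_derivative, add_comm 2 j]
  · rfl

lemma coeff_cotPoly_ne_zero_iff (k i : ℕ) :
    (cotPoly k).coeff i ≠ 0 ↔ i ≤ k + 1 ∧ Odd (i + k) := by
  induction k generalizing i with
  | zero =>
    rw [cotPoly, coeff_X]
    rcases i with _ | _ | i <;> simp [Nat.odd_iff]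
  | succ k ih =>
    have hnext := ih (i + 1)
    have hprev := ih (i - 1)
    rw [coeff_cotPoly_succ]
    split_ifs with hi
    · simp only [ne_eq, Nat.add_eq_zero_iff, mul_eq_zero, not_and_or, not_or, Nat.odd_iff]
        at hnext hprev ⊢
      omega
    · simp only [ne_eq, add_zero, mul_eq_zero, not_or, Nat.odd_iff] at hnext ⊢
      omega

section OrderedRing

variable {R : Type*} [CommRing R] [LinearOrder R] [IsStrictOrderedRing R]

lemma aeval_pos_of_coeff_ne_zero_even {p : ℕ[X]} (heven : ∀ i, p.coeff i ≠ 0 → Even i)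
    {t : R} {j : ℕ} (hj : p.coeff j ≠ 0) (ht : 0 < t ^ j) : 0 < aeval t p := by
  rw [aeval_eq_sum_range]
  refine Finset.sum_pos' (fun i _ => ?_) ⟨j, ?_, ?_⟩
  · rw [nsmul_eq_mul]
    by_cases hi : p.coeff i = 0
    · simp [hi]
    · exact mul_nonneg (Nat.cast_nonneg _) ((heven i hi).pow_nonneg t)
  · exact Finset.mem_range_succ_iff.mpr (le_natDegree_of_ne_zero hj)
  · rw [nsmul_eq_mul]
    exact mul_pos (Nat.cast_pos.mpr (Nat.pos_of_ne_zero hj)) ht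

lemma aeval_cotPoly_eq_zero_iff (k : ℕ) {t : R} : aeval t (cotPoly k) = 0 ↔ Even k ∧ t = 0 := by
  rcases Nat.even_or_odd k with hk | hk
  · refine ⟨fun h => ⟨hk, ?_⟩, ?_⟩
    · by_contra ht
      have heven : ∀ i, (X * cotPoly k).coeff i ≠ 0 → Even i := by
        rintro (_ | i) hi
        · exact Even.zero
        · rw [coeff_X_mul, coeff_cotPoly_ne_zero_iff] at hi
          exact ((Nat.odd_add.mp hi.2).mpr hk).add_one
      have hpos := aeval_pos_of_coeff_ne_zero_even heven (t := t) (j := 2)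
        (by rw [coeff_X_mul, coeff_cotPoly_ne_zero_iff]; exact ⟨by omega, hk.one_add⟩)
        (by positivity)
      simp [h] at hpos
    · rintro ⟨-, rfl⟩
      have hcoeff : (cotPoly k).coeff 0 = 0 := by
        by_contra h
        exact Nat.not_odd_iff_even.mpr hk (by simpa using ((coeff_cotPoly_ne_zero_iff k 0).mp h).2)
      rw [← coeff_zero_eq_aeval_zero', hcoeff, map_zero]
  · have heven : ∀ i, (cotPoly k).coeff i ≠ 0 → Even i := fun i hi =>
      (Nat.odd_add'.mp ((coeff_cotPoly_ne_zero_iff k i).mp hi).2).mp hk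
    have hpos := aeval_pos_of_coeff_ne_zero_even heven (t := t) (j := 0)
      ((coeff_cotPoly_ne_zero_iff k 0).mpr ⟨by omega, by simpa using hk⟩) (by simp)
    simp [hpos.ne', Nat.not_even_iff_odd.mpr hk]

end OrderedRing

theorem IsAlgebraic.aeval {K A : Type*} [Field K] [CommRing A] [Algebra K A] {r : A}
    (hr : IsAlgebraic K r) (p : K[X]) : IsAlgebraic K (aeval r p) :=
  not_not.mp fun h => (transcendental_aeval_iff.mp h).1 hr

lemma isAlgebraic_cot_rat_mul_pi (q : ℚ) : IsAlgebraic ℤ (cot (q * π)) := by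
  rw [cot_eq_cos_div_sin, div_eq_mul_inv]
  exact (isAlgebraic_cos_rat_mul_pi q).mul (isAlgebraic_sin_rat_mul_pi q).inv

lemma isAlgebraic_aeval_cotPoly_cot (k : ℕ) (q : ℚ) :
    IsAlgebraic ℚ (aeval (cot (π * q)) (cotPoly k)) := by
  have hcot : IsAlgebraic ℚ (cot (π * q)) :=
    mul_comm (q : ℝ) π ▸ (isAlgebraic_cot_rat_mul_pi q).extendScalars (algebraMap ℤ ℚ).injective_int
  simpa only [aeval_map_algebraMap] using hcot.aeval ((cotPoly k).map (algebraMap ℕ ℚ))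

lemma sin_pi_mul_eq_zero_iff {x : ℝ} : sin (π * x) = 0 ↔ x ∈ range ((↑) : ℤ → ℝ) := by
  simp only [sin_eq_zero_iff, mul_comm _ π, mul_right_inj' pi_ne_zero, mem_range]

lemma cot_pi_mul_eq_zero_iff {x : ℝ} (hx : x ∉ range ((↑) : ℤ → ℝ)) :
    cot (π * x) = 0 ↔ ∃ m : ℤ, x = m + 1 / 2 := by
  rw [cot_eq_cos_div_sin, div_eq_zero_iff, or_iff_left (mt sin_pi_mul_eq_zero_iff.mp hx),
    ← neg_eq_zero, ← sin_sub_pi_div_two, show π * x - π / 2 = π * (x - 1 / 2) by ring,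
    sin_pi_mul_eq_zero_iff]
  simp only [mem_range, eq_sub_iff_add_eq, eq_comm]

lemma ne_neg_natCast_of_notMem_range_intCast {x : ℝ} (hx : x ∉ range ((↑) : ℤ → ℝ)) :
    ∀ m : ℕ, x ≠ -m :=
  fun m h => hx ⟨-m, by simp [h]⟩

lemma one_sub_notMem_range_intCast {x : ℝ} (hx : x ∉ range ((↑) : ℤ → ℝ)) :
    1 - x ∉ range ((↑) : ℤ → ℝ) :=
  fun ⟨n, hn⟩ => hx ⟨1 - n, by push_cast; linarith⟩

lemma analyticAt_Gamma {x : ℝ} (hx : ∀ m : ℕ, x ≠ -m) : AnalyticAt ℝ Gamma x := by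
  have hx' : ∀ m : ℕ, (x : ℂ) ≠ -m := fun m h => hx m (by exact_mod_cast h)
  have hC : AnalyticAt ℂ Complex.Gamma x := by
    simpa [Pi.inv_def] using (Complex.differentiable_one_div_Gamma.analyticAt (x : ℂ)).inv
      (inv_ne_zero (Complex.Gamma_ne_zero hx'))
  have hre : Gamma = fun y : ℝ => (Complex.Gamma y).re := funext fun y => by
    rw [Complex.Gamma_ofReal, Complex.ofReal_re]
  rw [hre]
  exact (Complex.reCLM.analyticAt _).comp (hC.restrictScalars.comp (Complex.ofRealCLM.analyticAt x))

lemma analyticOnNhd_digamma : AnalyticOnNhd ℝ digamma {x | ∀ m : ℕ, x ≠ -m} := by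
  have hΓ : AnalyticOnNhd ℝ Gamma {x | ∀ m : ℕ, x ≠ -m} := fun x hx => analyticAt_Gamma hx
  exact fun x hx => (hΓ.deriv x hx).div (hΓ x hx) (Gamma_ne_zero hx)

lemma hasDerivAt_iteratedDeriv_digamma (k : ℕ) {x : ℝ} (hx : ∀ m : ℕ, x ≠ -m) :
    HasDerivAt (iteratedDeriv k digamma) (iteratedDeriv (k + 1) digamma x) x := by
  rw [iteratedDeriv_succ, iteratedDeriv_eq_iterate]
  exact (analyticOnNhd_digamma.iterated_deriv k x hx).differentiableAt.hasDerivAt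

lemma digamma_one_sub_sub_digamma {x : ℝ} (hx : x ∉ range ((↑) : ℤ → ℝ)) :
    digamma (1 - x) - digamma x = π * cot (π * x) := by
  have hx₀ := ne_neg_natCast_of_notMem_range_intCast hx
  have hx₁ := ne_neg_natCast_of_notMem_range_intCast (one_sub_notMem_range_intCast hx)
  have hsin : sin (π * x) ≠ 0 := mt sin_pi_mul_eq_zero_iff.mp hx
  have hdiff₁ : DifferentiableAt ℝ (fun y => Gamma (1 - y)) x :=
    (differentiableAt_Gamma hx₁).comp x (by fun_prop)
  have hdiffsin : DifferentiableAt ℝ (fun y => sin (π * y)) x := by fun_prop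
  have hL : logDeriv (fun y => Gamma y * Gamma (1 - y)) x = digamma x - digamma (1 - x) := by
    rw [logDeriv_mul (f := Gamma) (g := fun y => Gamma (1 - y)) x (Gamma_ne_zero hx₀)
        (Gamma_ne_zero hx₁) (differentiableAt_Gamma hx₀) hdiff₁,
      show (fun y => Gamma (1 - y)) = Gamma ∘ (fun y => 1 - y) from rfl,
      logDeriv_comp (differentiableAt_Gamma hx₁) (by fun_prop)]
    simp [digamma, logDeriv_apply, sub_eq_add_neg]
  have hR : logDeriv (fun y => π / sin (π * y)) x = -(π * cot (π * x)) := by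
    rw [logDeriv_div x pi_ne_zero hsin (differentiableAt_const _) hdiffsin,
      show (fun y => sin (π * y)) = sin ∘ (fun y => π * y) from rfl,
      logDeriv_comp differentiableAt_sin (by fun_prop)]
    simp [logDeriv_const, Real.logDeriv_sin, mul_comm]
  have hfun : (fun y => Gamma y * Gamma (1 - y)) = fun y => π / sin (π * y) :=
    funext Gamma_mul_Gamma_one_sub
  rw [hfun, hR] at hL
  linarith

lemma hasDerivAt_cot {x : ℝ} (hx : sin x ≠ 0) : HasDerivAt cot (-(1 + cot x ^ 2)) x := by
  have h := (hasDerivAt_cos x).div (hasDerivAt_sin x) hx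
  rw [show cos / sin = cot from funext fun y => (cot_eq_cos_div_sin y).symm] at h
  refine h.congr_deriv ?_
  rw [cot_eq_cos_div_sin]
  field_simp
  ring

lemma hasDerivAt_aeval_cot_pi_mul (p : ℕ[X]) {x : ℝ} (hx : sin (π * x) ≠ 0) :
    HasDerivAt (fun y => aeval (cot (π * y)) p)
      (-(π * aeval (cot (π * x)) ((1 + X ^ 2) * derivative p))) x := by
  have h := (p.hasDerivAt_aeval _).comp x
    ((hasDerivAt_cot hx).comp x ((hasDerivAt_id x).const_mul π))
  refine h.congr_deriv ?_
  simp only [Function.comp_apply, map_mul, map_add, map_one, map_pow, aeval_X]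
  ring

theorem iteratedDeriv_digamma_one_sub_sub (k : ℕ) {x : ℝ} (hx : x ∉ range ((↑) : ℤ → ℝ)) :
    iteratedDeriv k digamma (1 - x) - (-1) ^ k * iteratedDeriv k digamma x =
      aeval (cot (π * x)) (cotPoly k) * π ^ (k + 1) := by
  induction k generalizing x with
  | zero => simpa [cotPoly, mul_comm] using digamma_one_sub_sub_digamma hx
  | succ k ih =>
    have hx₀ := ne_neg_natCast_of_notMem_range_intCast hx
    have hx₁ := ne_neg_natCast_of_notMem_range_intCast (one_sub_notMem_range_intCast hx)
    have hsin : sin (π * x) ≠ 0 := mt sin_pi_mul_eq_zero_iff.mp hx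
    have hL := ((hasDerivAt_iteratedDeriv_digamma k hx₁).comp x ((hasDerivAt_id x).const_sub 1)).sub
      ((hasDerivAt_iteratedDeriv_digamma k hx₀).const_mul ((-1) ^ k))
    have hR := ((hasDerivAt_aeval_cot_pi_mul (cotPoly k) hsin).mul_const (π ^ (k + 1)))
      |>.congr_of_eventuallyEq <| by
        filter_upwards [isClosed_range_intCast.isOpen_compl.mem_nhds hx] with y hy using ih hy
    have hderiv := hL.unique hR
    rw [cotPoly]
    linear_combination -hderiv

open Real in
theorem stmt_13_general (k : ℕ) (α : ℚ) (hα : ¬ ∃ m : ℤ, α = m) :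
    ((iteratedDeriv k digamma (1 - (α:ℝ)) - (-1 : ℝ)^k * iteratedDeriv k digamma (α:ℝ) = 0) ∨
      ∃ a : ℝ, IsAlgebraic ℚ a ∧ a ≠ 0 ∧
        iteratedDeriv k digamma (1 - (α:ℝ)) - (-1 : ℝ)^k * iteratedDeriv k digamma (α:ℝ) =
          a * π^(k+1)) ∧
    (iteratedDeriv k digamma (1 - (α:ℝ)) - (-1 : ℝ)^k * iteratedDeriv k digamma (α:ℝ) = 0 ↔
      Even k ∧ ∃ m : ℤ, α = m + 1/2) := by
  have hx : (α : ℝ) ∉ range ((↑) : ℤ → ℝ) := fun ⟨m, hm⟩ => hα ⟨m, by exact_mod_cast hm.symm⟩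
  have hzero : aeval (cot (π * α)) (cotPoly k) = 0 ↔ Even k ∧ ∃ m : ℤ, α = m + 1 / 2 := by
    rw [aeval_cotPoly_eq_zero_iff, cot_pi_mul_eq_zero_iff hx]
    refine and_congr_right' (exists_congr fun m => ?_)
    rw [← Rat.cast_inj (α := ℝ)]
    push_cast
    rfl
  rw [iteratedDeriv_digamma_one_sub_sub k hx]
  refine ⟨?_, by simp [pi_ne_zero, hzero]⟩
  by_cases ha : aeval (cot (π * α)) (cotPoly k) = 0
  · exact .inl (by rw [ha, zero_mul])
  · exact .inr ⟨_, isAlgebraic_aeval_cotPoly_cot k α, ha, rfl⟩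

open Real in
theorem stmt_13 (k : ℕ) (hk : 0 < k) (α : ℚ) (hα : ¬ ∃ m : ℤ, α = m) :
    ((iteratedDeriv k digamma (1 - (α:ℝ)) - (-1 : ℝ)^k * iteratedDeriv k digamma (α:ℝ) = 0) ∨
      ∃ a : ℝ, IsAlgebraic ℚ a ∧ a ≠ 0 ∧
        iteratedDeriv k digamma (1 - (α:ℝ)) - (-1 : ℝ)^k * iteratedDeriv k digamma (α:ℝ) =
          a * π^(k+1)) ∧
    (iteratedDeriv k digamma (1 - (α:ℝ)) - (-1 : ℝ)^k * iteratedDeriv k digamma (α:ℝ) = 0 ↔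
      Even k ∧ ∃ m : ℤ, α = m + 1/2) :=
  stmt_13_general k α hα
end
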